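/- Let Ω ⊆ M^d be an nc domain, let f be a fine holomorphic function on Ω, and let a ∈ Ω ∩ M_n^d. Then for all sufficiently small h, k ∈ M_n^d, the d-tuple X of 4n×4n block matrices with X_r = [[a_r, k_r, h_r, 0],[0, a_r, 0, h_r],[0, 0, a_r, k_r],[0, 0, 0, a_r]] lies in Ω and f(X) = [[f(a), Df(a)[k], Df(a)[h], Hf(a)[h,k]],[0, f(a), 0, Df(a)[h]],[0, 0, f(a), Df(a)[k]],[0, 0, 0, f(a)]]. -/

import Mathlib

open Matrix Filter Topology
open scoped Matrix.Norms.L2Operator Kronecker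

noncomputable section

/-- `n × n` complex matrices, with the `L²` operator norm. -/
abbrev Mat (n : ℕ) : Type := Matrix (Fin n) (Fin n) ℂ

/-- `d`-tuples of `n × n` complex matrices, normed by the max of the operator norms. -/
abbrev MatTup (d n : ℕ) : Type := Fin d → Mat n

/-- `M^d`, the disjoint union over all `n` of the `d`-tuples of `n × n` matrices. -/
abbrev MSpace (d : ℕ) : Type := Σ n : ℕ, MatTup d n

/-- Free (noncommutative) polynomials in `d` variables over `ℂ`. -/
abbrev FreePoly (d : ℕ) : Type := FreeAlgebra ℂ (Fin d)

/-- Evaluation of a free polynomial at a `d`-tuple of matrices. -/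
def polyEval {d n : ℕ} (p : FreePoly d) (x : MatTup d n) : Mat n :=
  FreeAlgebra.lift ℂ (fun i => x i) p

/-- The (Fréchet) derivative of the evaluation of a free polynomial, `Dp(a)[h]`. -/
def polyDeriv {d n : ℕ} (p : FreePoly d) (a h : MatTup d n) : Mat n :=
  fderiv ℂ (fun x : MatTup d n => polyEval p x) a h

/-- Assemble a `2 × 2` block matrix.  -/
def blk {n m : ℕ} (A : Matrix (Fin n) (Fin n) ℂ) (B : Matrix (Fin n) (Fin m) ℂ)
    (C : Matrix (Fin m) (Fin n) ℂ) (D : Matrix (Fin m) (Fin m) ℂ) : Mat (n + m) :=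
  Matrix.reindex finSumFinEquiv finSumFinEquiv (Matrix.fromBlocks A B C D)

/-- Coordinatewise direct sum of tuples of matrices. -/
def dSum {d n m : ℕ} (x : MatTup d n) (y : MatTup d m) : MatTup d (n + m) :=
  fun r => blk (x r) 0 0 (y r)

/-- Coordinatewise conjugation `s⁻¹ x s`. -/
def simConj {d n : ℕ} (s : Mat n) (x : MatTup d n) : MatTup d n :=
  fun r => s⁻¹ * x r * s

/-- An nc domain: a d.u. open subset of `M^d` closed under direct sums and unitary
conjugations. -/
structure IsNCDomain {d : ℕ} (Ω : Set (MSpace d)) : Prop where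
  duOpen : ∀ n : ℕ, IsOpen {x : MatTup d n | (⟨n, x⟩ : MSpace d) ∈ Ω}
  dsum_mem : ∀ {n m : ℕ} (x : MatTup d n) (y : MatTup d m),
    (⟨n, x⟩ : MSpace d) ∈ Ω → (⟨m, y⟩ : MSpace d) ∈ Ω →
    (⟨n + m, dSum x y⟩ : MSpace d) ∈ Ω
  unitary_mem : ∀ {n : ℕ} (u : Matrix.unitaryGroup (Fin n) ℂ) (x : MatTup d n),
    (⟨n, x⟩ : MSpace d) ∈ Ω → (⟨n, simConj (u : Mat n) x⟩ : MSpace d) ∈ Ω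

/-- A d.u. open subset of `M^d`: each slice is open. -/
def DUOpen {d : ℕ} (U : Set (MSpace d)) : Prop :=
  ∀ n : ℕ, IsOpen {x : MatTup d n | (⟨n, x⟩ : MSpace d) ∈ U}

/-- An nc function on `Ω`: a graded function respecting direct sums and similarities. -/
structure IsNCFunctionOn {d : ℕ} (Ω : Set (MSpace d)) (f : ∀ n, MatTup d n → Mat n) : Prop where
  dsum_eq : ∀ {n m : ℕ} (x : MatTup d n) (y : MatTup d m),
    (⟨n, x⟩ : MSpace d) ∈ Ω → (⟨m, y⟩ : MSpace d) ∈ Ω →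
    (⟨n + m, dSum x y⟩ : MSpace d) ∈ Ω →
    f (n + m) (dSum x y) = blk (f n x) 0 0 (f m y)
  sim_eq : ∀ {n : ℕ} (s : Mat n) (x : MatTup d n), IsUnit s →
    (⟨n, x⟩ : MSpace d) ∈ Ω → (⟨n, simConj s x⟩ : MSpace d) ∈ Ω →
    f n (simConj s x) = s⁻¹ * f n x * s

/-- A fine open set: a union of nc domains. -/
def FineOpen {d : ℕ} (U : Set (MSpace d)) : Prop :=
  ∀ x ∈ U, ∃ Ω : Set (MSpace d), IsNCDomain Ω ∧ x ∈ Ω ∧ Ω ⊆ U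

/-- A fine holomorphic function: an nc function on a fine open set, locally bounded in
the fine topology. -/
def IsFineHolo {d : ℕ} (U : Set (MSpace d)) (f : ∀ n, MatTup d n → Mat n) : Prop :=
  FineOpen U ∧ IsNCFunctionOn U f ∧
    ∀ a ∈ U, ∃ Ω : Set (MSpace d), IsNCDomain Ω ∧ a ∈ Ω ∧ Ω ⊆ U ∧
      ∃ C : ℝ, ∀ x ∈ Ω, ‖f x.1 x.2‖ ≤ C

/-- `a^{(k)}`, the direct sum of `k` copies of `a`. -/
def ampTup {d n : ℕ} (k : ℕ) (a : MatTup d n) : MatTup d (k * n) :=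
  fun r => Matrix.reindex finProdFinEquiv finProdFinEquiv
    ((1 : Matrix (Fin k) (Fin k) ℂ) ⊗ₖ a r)

/-- The basic fat neighborhood `F(a,r)`: all unitary conjugates of points within `r`
of some `a^{(k)}`. -/
def FBall {d : ℕ} (a : MSpace d) (r : ℝ) : Set (MSpace d) :=
  {y | ∃ k : ℕ, 1 ≤ k ∧ ∃ x : MatTup d (k * a.1), ‖x - ampTup k a.2‖ < r ∧
    ∃ u : Matrix.unitaryGroup (Fin (k * a.1)) ℂ,
      y = ⟨k * a.1, simConj (u : Mat (k * a.1)) x⟩}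

/-- A fat open set. -/
def FatOpen {d : ℕ} (U : Set (MSpace d)) : Prop :=
  ∀ y ∈ U, ∃ ε : ℝ, 0 < ε ∧ FBall y ε ⊆ U

/-- A fat holomorphic function: an nc function on a fat open set, locally bounded in the
fat topology. -/
def IsFatHolo {d : ℕ} (U : Set (MSpace d)) (f : ∀ n, MatTup d n → Mat n) : Prop :=
  FatOpen U ∧ IsNCFunctionOn U f ∧
    ∀ a ∈ U, ∃ ε : ℝ, 0 < ε ∧ FBall a ε ⊆ U ∧
      ∃ C : ℝ, ∀ x ∈ FBall a ε, ‖f x.1 x.2‖ ≤ C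

/-- The Hessian `Hf(a)[h,k]`: the derivative in direction `k` of `x ↦ Df(x)[h]`. -/
def ncHess {d n : ℕ} (f : ∀ m, MatTup d m → Mat m) (a h k : MatTup d n) : Mat n :=
  fderiv ℂ (fun x : MatTup d n => fderiv ℂ (f n) x h) a k

/-- Join a `(d-k)`-tuple and a `k`-tuple into a `d`-tuple. -/
def joinTup {d k : ℕ} (hk : k ≤ d) {n : ℕ} (y : Fin (d - k) → Mat n) (z : Fin k → Mat n) :
    Fin d → Mat n :=
  fun j => if hj : (j : ℕ) < d - k then y ⟨j, hj⟩
    else z ⟨(j : ℕ) - (d - k), by have := j.isLt; omega⟩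

/-- A tuple `a` is broad if every matrix is a polynomial in `a`. -/
def Broad {d n : ℕ} (a : MatTup d n) : Prop :=
  ∀ M : Mat n, ∃ p : FreePoly d, polyEval p a = M

/-- The ampliation `id_k ⊗ L` of a map `L : M_n^d → M_n`, acting blockwise on
`M_{kn}^d` (identifying `M_{kn}` with `k × k` block matrices over `M_n`). -/
def ampFun {d n : ℕ} (L : MatTup d n → Mat n) (k : ℕ) (H : MatTup d (k * n)) : Mat (k * n) :=
  fun p q =>
    L (fun r s t => H r (finProdFinEquiv ((finProdFinEquiv.symm p).1, s))
        (finProdFinEquiv ((finProdFinEquiv.symm q).1, t)))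
      (finProdFinEquiv.symm p).2 (finProdFinEquiv.symm q).2

/-- The set of operator norms of right inverses of the ampliation `L_k`. -/
def RightInvVals {d n : ℕ} (L : MatTup d n → Mat n) (k : ℕ) : Set ℝ :=
  {c | ∃ S : Mat (k * n) →L[ℂ] MatTup d (k * n), (∀ Y, ampFun L k (S Y) = Y) ∧ ‖S‖ = c}

/-- `L` is completely nonsingular: every ampliation has a right inverse, and
`sup_k inf {‖R‖ : R right inverse of L_k} < ∞`. -/
def CompletelyNonsingular {d n : ℕ} (L : MatTup d n → Mat n) : Prop :=
  (∀ k : ℕ, 1 ≤ k → (RightInvVals L k).Nonempty) ∧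
    BddAbove {c : ℝ | ∃ k : ℕ, 1 ≤ k ∧ c = sInf (RightInvVals L k)}

/-- `c(L) = (sup_k inf {‖R‖ : R right inverse of L_k})⁻¹`. -/
def cConst {d n : ℕ} (L : MatTup d n → Mat n) : ℝ :=
  (sSup {c : ℝ | ∃ k : ℕ, 1 ≤ k ∧ c = sInf (RightInvVals L k)})⁻¹

/-- Evaluation of a `J × J` matrix of free polynomials at `x ∈ M_n^d`, as an
`Jn × Jn` matrix. -/
def matPolyEval {d J n : ℕ} (δ : Matrix (Fin J) (Fin J) (FreePoly d)) (x : MatTup d n) :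
    Matrix (Fin (J * n)) (Fin (J * n)) ℂ :=
  fun p q => polyEval (δ (finProdFinEquiv.symm p).1 (finProdFinEquiv.symm q).1) x
    (finProdFinEquiv.symm p).2 (finProdFinEquiv.symm q).2

/-- The basic free open set `G_δ = {x : ‖δ(x)‖ < 1}`. -/
def GSet {d J : ℕ} (δ : Matrix (Fin J) (Fin J) (FreePoly d)) : Set (MSpace d) :=
  {x | ‖matPolyEval δ x.2‖ < 1}

/-- The linear map `Γ ↦ aΓ - Γa` from `M_n` to `M_n^d`. -/
def commMap {d n : ℕ} (a : MatTup d n) : Mat n →ₗ[ℂ] MatTup d n where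
  toFun := fun Γ => fun r => a r * Γ - Γ * a r
  map_add' := by
    intro Γ₁ Γ₂
    funext r
    simp only [Matrix.mul_add, Matrix.add_mul, Pi.add_apply]
    abel
  map_smul' := by
    intro c Γ
    funext r
    simp [Matrix.mul_smul, Matrix.smul_mul, smul_sub]

/-- The subspace `{aΓ - Γa : Γ ∈ M_n}` of `M_n^d`. -/
def commSubspace {d n : ℕ} (a : MatTup d n) : Submodule ℂ (MatTup d n) :=
  LinearMap.range (commMap a)

end

/-!
A bounded nc function is holomorphic. The nc axioms give
`f([[x, H], [0, y]]) = [[f(x), Δf(x,y)[H]], [0, f(y)]]`, with `Δf(x,y)[x - y] = f(x) - f(y)` and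
`Δf(x,y)[cH] = c Δf(x,y)[H]` (conjugate by `diag(1, c)`). Boundedness and homogeneity make
`Δf(x,y)[H] = O(‖H‖)`, hence `f` is locally Lipschitz at every level, hence `Δf(x,y)[H]` is
Lipschitz in `(x, y)` with constant `O(‖H‖)`. Then
`f(x + H) - f(x) - Δf(x,x)[H] = Δf(x + H, x)[H] - Δf(x,x)[H] = O(‖H‖²)`; in the same way the
second differences of `f` are `O(‖G₁‖ ‖G₂‖)`, which forces `Δf(x,x)` to be additive, so
`Df(x) = Δf(x,x)`.

At level `2n` the given point is `[[X_k, h ⊕ h], [0, X_k]]` with `X_k = [[a, k], [0, a]]`, so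
its image has diagonal blocks `f(X_k) = [[f(a), Df(a)[k]], [0, f(a)]]`. Conjugating by the
permutation of the two middle blocks exchanges `h` and `k`, and identifies the remaining block
with the top right block of `Df(X_h)[k ⊕ k]`, which is the derivative in direction `k` of
`x ↦ Δf(x,x)[h] = Df(x)[h]`, i.e. `Hf(a)[h,k]`.
-/

noncomputable section

section BlockMatrix

variable {p q : ℕ}

theorem blk_mul (A A' : Mat p) (B B' : Matrix (Fin p) (Fin q) ℂ)
    (C C' : Matrix (Fin q) (Fin p) ℂ) (D D' : Mat q) :
    blk A B C D * blk A' B' C' D'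
      = blk (A * A' + B * C') (A * B' + B * D') (C * A' + D * C') (C * B' + D * D') := by
  simp only [blk, reindex_apply, submatrix_mul_equiv, fromBlocks_multiply]

theorem blk_add (A A' : Mat p) (B B' : Matrix (Fin p) (Fin q) ℂ)
    (C C' : Matrix (Fin q) (Fin p) ℂ) (D D' : Mat q) :
    blk A B C D + blk A' B' C' D' = blk (A + A') (B + B') (C + C') (D + D') := by
  simp only [blk, reindex_apply, ← fromBlocks_add]
  rfl

theorem blk_smul (c : ℂ) (A : Mat p) (B : Matrix (Fin p) (Fin q) ℂ)
    (C : Matrix (Fin q) (Fin p) ℂ) (D : Mat q) :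
    c • blk A B C D = blk (c • A) (c • B) (c • C) (c • D) := by
  simp only [blk, reindex_apply, ← fromBlocks_smul]
  rfl

@[simp] theorem blk_zero : (blk 0 0 0 0 : Mat (p + q)) = 0 := by
  simp [blk]

theorem blk_one : (blk 1 0 0 1 : Mat (p + q)) = 1 := by
  simp [blk]

theorem blk_inj {A A' : Mat p} {B B' : Matrix (Fin p) (Fin q) ℂ}
    {C C' : Matrix (Fin q) (Fin p) ℂ} {D D' : Mat q}
    (h : blk A B C D = blk A' B' C' D') : A = A' ∧ B = B' ∧ C = C' ∧ D = D' :=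
  fromBlocks_inj.mp ((reindex finSumFinEquiv finSumFinEquiv).injective h)

theorem blk_surjective (M : Mat (p + q)) : ∃ A B C D, blk A B C D = M := by
  set N := reindex finSumFinEquiv.symm finSumFinEquiv.symm M
  refine ⟨N.toBlocks₁₁, N.toBlocks₁₂, N.toBlocks₂₁, N.toBlocks₂₂, ?_⟩
  rw [blk, fromBlocks_toBlocks]
  simp [N]

def topRight (M : Mat (p + q)) : Matrix (Fin p) (Fin q) ℂ :=
  (reindex finSumFinEquiv.symm finSumFinEquiv.symm M).toBlocks₁₂

@[simp] theorem topRight_blk (A : Mat p) (B : Matrix (Fin p) (Fin q) ℂ)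
    (C : Matrix (Fin q) (Fin p) ℂ) (D : Mat q) : topRight (blk A B C D) = B := by
  simp [topRight, blk]

def topRightCLM (p q : ℕ) : Mat (p + q) →L[ℂ] Matrix (Fin p) (Fin q) ℂ :=
  LinearMap.toContinuousLinearMap
    { toFun := topRight
      map_add' := fun M N => by ext; simp [topRight, toBlocks₁₂]
      map_smul' := fun c M => by ext; simp [topRight, toBlocks₁₂] }

theorem blk_unipotent_mul_neg (L : Matrix (Fin p) (Fin q) ℂ) :
    blk 1 L 0 1 * blk 1 (-L) 0 1 = 1 := by
  simp [blk_mul, blk_one]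

theorem isUnit_blk_unipotent (L : Matrix (Fin p) (Fin q) ℂ) : IsUnit (blk 1 L 0 1) :=
  ⟨⟨_, _, blk_unipotent_mul_neg L, by simpa using blk_unipotent_mul_neg (-L)⟩, rfl⟩

theorem blk_unipotent_conj (L : Matrix (Fin p) (Fin q) ℂ) (A : Mat p) (D : Mat q) :
    (blk 1 L 0 1)⁻¹ * blk A 0 0 D * blk 1 L 0 1 = blk A (A * L - L * D) 0 D := by
  rw [inv_eq_right_inv (blk_unipotent_mul_neg L)]
  simp [blk_mul, sub_eq_add_neg]

theorem blk_diag_mul_inv {c : ℂ} (hc : c ≠ 0) :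
    (blk 1 0 0 (c • 1) : Mat (p + q)) * blk 1 0 0 (c⁻¹ • 1) = 1 := by
  simp [blk_mul, smul_smul, hc, blk_one]

theorem isUnit_blk_diag {c : ℂ} (hc : c ≠ 0) : IsUnit (blk 1 0 0 (c • 1) : Mat (p + q)) :=
  ⟨⟨_, _, blk_diag_mul_inv hc, by simpa using blk_diag_mul_inv (inv_ne_zero hc)⟩, rfl⟩

theorem blk_diag_conj {c : ℂ} (hc : c ≠ 0) (A : Mat p) (B : Matrix (Fin p) (Fin q) ℂ)
    (C : Matrix (Fin q) (Fin p) ℂ) (D : Mat q) :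
    (blk 1 0 0 (c • 1))⁻¹ * blk A B C D * blk 1 0 0 (c • 1) = blk A (c • B) (c⁻¹ • C) D := by
  rw [inv_eq_right_inv (blk_diag_mul_inv hc)]
  simp [blk_mul, smul_smul, hc]

def midSwap (p : ℕ) : Mat (p + p + (p + p)) :=
  blk (blk 1 0 0 0) (blk 0 0 1 0) (blk 0 1 0 0) (blk 0 0 0 1)

theorem midSwap_mul_self (p : ℕ) : midSwap p * midSwap p = 1 := by
  simp [midSwap, blk_mul, blk_add, blk_one]

theorem isUnit_midSwap (p : ℕ) : IsUnit (midSwap p) :=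
  ⟨⟨_, _, midSwap_mul_self p, midSwap_mul_self p⟩, rfl⟩

theorem midSwap_inv (p : ℕ) : (midSwap p)⁻¹ = midSwap p :=
  inv_eq_right_inv (midSwap_mul_self p)

theorem midSwap_conj (m₁₁ m₁₂ m₁₃ m₁₄ m₂₁ m₂₂ m₂₃ m₂₄ m₃₁ m₃₂ m₃₃ m₃₄ m₄₁ m₄₂ m₄₃ m₄₄ : Mat p) :
    midSwap p * blk (blk m₁₁ m₁₂ m₂₁ m₂₂) (blk m₁₃ m₁₄ m₂₃ m₂₄)
        (blk m₃₁ m₃₂ m₄₁ m₄₂) (blk m₃₃ m₃₄ m₄₃ m₄₄) * midSwap p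
      = blk (blk m₁₁ m₁₃ m₃₁ m₃₃) (blk m₁₂ m₁₄ m₃₂ m₃₄)
          (blk m₂₁ m₂₃ m₄₁ m₄₃) (blk m₂₂ m₂₄ m₄₂ m₄₄) := by
  simp [midSwap, blk_mul, blk_add]

end BlockMatrix

section UpperTriangular

variable {d m : ℕ}

def upperTup (x H y : MatTup d m) : MatTup d (m + m) :=
  fun r => blk (x r) (H r) 0 (y r)

theorem upperTup_zero (x y : MatTup d m) : upperTup x 0 y = dSum x y := rfl

theorem dSum_zero : dSum (0 : MatTup d m) (0 : MatTup d m) = 0 :=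
  funext fun _ => blk_zero

def upperTupCLM (d m : ℕ) : (MatTup d m × MatTup d m × MatTup d m) →L[ℂ] MatTup d (m + m) :=
  LinearMap.toContinuousLinearMap
    { toFun := fun z => upperTup z.1 z.2.1 z.2.2
      map_add' := fun z w => by funext r; simp [upperTup, blk_add]
      map_smul' := fun c z => by funext r; simp [upperTup, blk_smul] }

theorem upperTup_sub (x H y x' H' y' : MatTup d m) :
    upperTup x H y - upperTup x' H' y' = upperTup (x - x') (H - H') (y - y') :=
  ((upperTupCLM d m).map_sub (x, H, y) (x', H', y')).symm

theorem norm_upperTup_le (x H y : MatTup d m) :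
    ‖upperTup x H y‖ ≤ ‖upperTupCLM d m‖ * (‖x‖ + ‖H‖ + ‖y‖) := by
  refine ((upperTupCLM d m).le_opNorm (x, H, y)).trans ?_
  gcongr
  simp only [Prod.norm_mk, max_le_iff]
  refine ⟨?_, ?_, ?_⟩ <;> linarith [norm_nonneg x, norm_nonneg H, norm_nonneg y]

theorem Filter.Tendsto.upperTup {α : Type*} {l : Filter α} {x H y : α → MatTup d m}
    {x₀ H₀ y₀ : MatTup d m} (hx : Tendsto x l (𝓝 x₀)) (hH : Tendsto H l (𝓝 H₀))
    (hy : Tendsto y l (𝓝 y₀)) :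
    Tendsto (fun t => _root_.upperTup (x t) (H t) (y t)) l (𝓝 (_root_.upperTup x₀ H₀ y₀)) :=
  ((upperTupCLM d m).continuous.tendsto (x₀, H₀, y₀)).comp (hx.prodMk_nhds (hH.prodMk_nhds hy))

theorem simConj_midSwap (a h k : MatTup d m) :
    simConj (midSwap m) (upperTup (upperTup a k a) (dSum h h) (upperTup a k a))
      = upperTup (upperTup a h a) (dSum k k) (upperTup a h a) := by
  funext r
  simp only [simConj, upperTup, dSum, midSwap_inv]
  rw [← blk_zero (p := m) (q := m), midSwap_conj, blk_zero]

/-- The nc difference-differential `Δf(x,y)[H]`. -/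
def ncDelta (f : ∀ m, MatTup d m → Mat m) (x y H : MatTup d m) : Mat m :=
  topRight (f (m + m) (upperTup x H y))

end UpperTriangular

namespace IsNCFunctionOn

variable {d : ℕ} {Ω : Set (MSpace d)} {f : ∀ m, MatTup d m → Mat m}

theorem mono {Ω' : Set (MSpace d)} (hf : IsNCFunctionOn Ω f) (h : Ω' ⊆ Ω) :
    IsNCFunctionOn Ω' f where
  dsum_eq x y hx hy hxy := hf.dsum_eq x y (h hx) (h hy) (h hxy)
  sim_eq s x hs hx hsx := hf.sim_eq s x hs (h hx) (h hsx)

theorem mul_eq_mul_of_intertwines (hf : IsNCFunctionOn Ω f) (hΩ : IsNCDomain Ω) {p q : ℕ}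
    {x : MatTup d p} {y : MatTup d q} (hx : (⟨p, x⟩ : MSpace d) ∈ Ω)
    (hy : (⟨q, y⟩ : MSpace d) ∈ Ω) (L : Matrix (Fin p) (Fin q) ℂ)
    (hL : ∀ r, x r * L = L * y r) : f p x * L = L * f q y := by
  have hxy := hΩ.dsum_mem x y hx hy
  have hfix : simConj (blk 1 L 0 1) (dSum x y) = dSum x y := by
    funext r
    simp [simConj, dSum, blk_unipotent_conj, hL]
  have h := hf.sim_eq _ _ (isUnit_blk_unipotent L) hxy (by rwa [hfix])
  rw [hfix, hf.dsum_eq x y hx hy hxy, blk_unipotent_conj] at h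
  exact sub_eq_zero.mp (blk_inj h).2.1.symm

theorem apply_upperTup (hf : IsNCFunctionOn Ω f) (hΩ : IsNCDomain Ω) {m : ℕ}
    {x H y : MatTup d m} (hx : (⟨m, x⟩ : MSpace d) ∈ Ω) (hy : (⟨m, y⟩ : MSpace d) ∈ Ω)
    (hX : (⟨m + m, upperTup x H y⟩ : MSpace d) ∈ Ω) :
    f (m + m) (upperTup x H y) = blk (f m x) (ncDelta f x y H) 0 (f m y) := by
  have hxy := hΩ.dsum_mem x y hx hy
  obtain ⟨A, B, C, D, hM⟩ := blk_surjective (f (m + m) (upperTup x H y))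
  -- `diag(1, 0)` and `diag(0, 1)` intertwine `[[x, H], [0, y]]` with `x ⊕ y`
  have hleft := hf.mul_eq_mul_of_intertwines hΩ hX hxy (blk 1 0 0 0) fun r => by
    simp [upperTup, dSum, blk_mul]
  have hright := hf.mul_eq_mul_of_intertwines hΩ hxy hX (blk 0 0 0 1) fun r => by
    simp [upperTup, dSum, blk_mul]
  rw [hf.dsum_eq x y hx hy hxy, ← hM] at hleft hright
  simp only [blk_mul, mul_one, mul_zero, zero_mul, one_mul, add_zero, zero_add] at hleft hright
  obtain ⟨rfl, -, rfl, -⟩ := blk_inj hleft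
  obtain ⟨-, -, -, rfl⟩ := blk_inj hright
  rw [ncDelta, ← hM, topRight_blk]

theorem ncDelta_smul (hf : IsNCFunctionOn Ω f) {m : ℕ} {x H y : MatTup d m} {c : ℂ}
    (hc : c ≠ 0) (hX : (⟨m + m, upperTup x H y⟩ : MSpace d) ∈ Ω)
    (hcX : (⟨m + m, upperTup x (c • H) y⟩ : MSpace d) ∈ Ω) :
    ncDelta f x y (c • H) = c • ncDelta f x y H := by
  have hconj : simConj (blk 1 0 0 (c • 1)) (upperTup x H y) = upperTup x (c • H) y := by
    funext r
    simp [simConj, upperTup, blk_diag_conj hc]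
  have h := hf.sim_eq _ _ (isUnit_blk_diag hc) hX (by rwa [hconj])
  obtain ⟨A, B, C, D, hM⟩ := blk_surjective (f (m + m) (upperTup x H y))
  rw [hconj, ← hM, blk_diag_conj hc] at h
  rw [ncDelta, ncDelta, h, ← hM, topRight_blk, topRight_blk]

theorem ncDelta_sub_eq (hf : IsNCFunctionOn Ω f) (hΩ : IsNCDomain Ω) {m : ℕ}
    {x y : MatTup d m} (hx : (⟨m, x⟩ : MSpace d) ∈ Ω) (hy : (⟨m, y⟩ : MSpace d) ∈ Ω)
    (hX : (⟨m + m, upperTup x (x - y) y⟩ : MSpace d) ∈ Ω) :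
    ncDelta f x y (x - y) = f m x - f m y := by
  have hxy := hΩ.dsum_mem x y hx hy
  have hconj : simConj (blk 1 1 0 1) (dSum x y) = upperTup x (x - y) y := by
    funext r
    simp [simConj, upperTup, dSum, blk_unipotent_conj]
  have h := hf.sim_eq _ _ (isUnit_blk_unipotent 1) hxy (by rwa [hconj])
  rw [hconj, hf.dsum_eq x y hx hy hxy, blk_unipotent_conj] at h
  simp [ncDelta, h]

end IsNCFunctionOn

section Homogeneous

theorem eq_zero_of_forall_mul_norm_le_sq {F : Type*} [NormedAddCommGroup F] {v : F} {C : ℝ}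
    (h : ∀ t : ℝ, 0 < t → t ≤ 1 → t * ‖v‖ ≤ C * t ^ 2) : v = 0 := by
  have hv : ∀ t : ℝ, 0 < t → t ≤ 1 → ‖v‖ ≤ C * t := fun t ht ht1 =>
    le_of_mul_le_mul_left (by nlinarith [h t ht ht1]) ht
  have hC : 0 ≤ C := by nlinarith [hv 1 one_pos le_rfl, norm_nonneg v]
  refine norm_le_zero_iff.mp (le_of_forall_pos_le_add fun ε hε => ?_)
  set t := min 1 (ε / (C + 1))
  have ht : 0 < t := lt_min one_pos (by positivity)
  have hCt : C * t ≤ ε := by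
    calc C * t ≤ (C + 1) * (ε / (C + 1)) := by
          gcongr
          · linarith
          · exact min_le_right _ _
      _ = ε := by field_simp
  linarith [hv t ht (min_le_left _ _)]

theorem norm_ofReal_smul {E : Type*} [NormedAddCommGroup E] [NormedSpace ℂ E] {t : ℝ}
    (ht : 0 ≤ t) (v : E) : ‖(t : ℂ) • v‖ = t * ‖v‖ := by
  rw [norm_smul, Complex.norm_of_nonneg ht]

variable {E F : Type*} [NormedAddCommGroup E] [NormedSpace ℂ E]
  [NormedAddCommGroup F] [NormedSpace ℂ F]

theorem hasFDerivAt_of_norm_sub_le_sq {g : E → F} {ψ : E →L[ℂ] F} {x : E} {r C : ℝ}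
    (hr : 0 < r) (h : ∀ H, ‖H‖ < r → ‖g (x + H) - g x - ψ H‖ ≤ C * ‖H‖ ^ 2) :
    HasFDerivAt g ψ x := by
  rw [hasFDerivAt_iff_isLittleO_nhds_zero]
  refine (Asymptotics.IsBigO.of_bound C ?_).trans_isLittleO
    (Asymptotics.isLittleO_norm_pow_id one_lt_two)
  filter_upwards [Metric.ball_mem_nhds (0 : E) hr] with H hH
  rw [mem_ball_zero_iff] at hH
  simpa using h H hH

def IsHomogeneousOnBall (φ : E → F) (r : ℝ) : Prop :=
  ∀ (c : ℂ) (H : E), c ≠ 0 → ‖H‖ < r → ‖c • H‖ < r → φ (c • H) = c • φ H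

namespace IsHomogeneousOnBall

variable {φ ψ : E → F} {r : ℝ}

theorem mono (hφ : IsHomogeneousOnBall φ r) {r' : ℝ} (h : r' ≤ r) :
    IsHomogeneousOnBall φ r' := fun c H hc hH hcH =>
  hφ c H hc (hH.trans_le h) (hcH.trans_le h)

theorem sub (hφ : IsHomogeneousOnBall φ r) (hψ : IsHomogeneousOnBall ψ r) :
    IsHomogeneousOnBall (fun H => φ H - ψ H) r := fun c H hc hH hcH => by
  simp only [hφ c H hc hH hcH, hψ c H hc hH hcH, smul_sub]

theorem map_zero (hφ : IsHomogeneousOnBall φ r) (hr : 0 < r) : φ 0 = 0 := by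
  have h := hφ 2 0 two_ne_zero (by simpa using hr) (by simpa using hr)
  rwa [smul_zero, two_smul, left_eq_add] at h

theorem map_ofReal_smul (hφ : IsHomogeneousOnBall φ r) {t : ℝ} (ht : 0 < t) (ht1 : t ≤ 1)
    {H : E} (hH : ‖H‖ < r) : φ ((t : ℂ) • H) = (t : ℂ) • φ H :=
  hφ _ H (by exact_mod_cast ht.ne') hH <| by
    rw [norm_ofReal_smul ht.le]
    nlinarith [norm_nonneg H]

theorem inv_smul_map_smul_eq (hφ : IsHomogeneousOnBall φ r) {H : E} {s u : ℝ} (hs : 0 < s)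
    (hu : 0 < u) (hsH : ‖(s : ℂ) • H‖ < r) (huH : ‖(u : ℂ) • H‖ < r) :
    (s : ℂ)⁻¹ • φ ((s : ℂ) • H) = (u : ℂ)⁻¹ • φ ((u : ℂ) • H) := by
  have hs' : (s : ℂ) ≠ 0 := by exact_mod_cast hs.ne'
  have hu' : (u : ℂ) ≠ 0 := by exact_mod_cast hu.ne'
  have hsu : (s : ℂ) • H = ((s : ℂ) / u) • ((u : ℂ) • H) := by
    rw [smul_smul, div_mul_cancel₀ _ hu']
  rw [hsu, hφ _ _ (div_ne_zero hs' hu') huH (by rwa [← hsu]), smul_smul]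
  congr 1
  field_simp

theorem norm_le_mul_norm (hφ : IsHomogeneousOnBall φ r) (hr : 0 < r) {M : ℝ}
    (hM : ∀ H, ‖H‖ < r → ‖φ H‖ ≤ M) {H : E} (hH : ‖H‖ < r) :
    ‖φ H‖ ≤ 2 * M / r * ‖H‖ := by
  rcases eq_or_ne H 0 with rfl | hH0
  · simp [hφ.map_zero hr]
  have hHpos : 0 < ‖H‖ := norm_pos_iff.mpr hH0
  set t := r / (2 * ‖H‖)
  have ht : 0 < t := by positivity
  have htH : ‖(t : ℂ) • H‖ = r / 2 := by
    rw [norm_ofReal_smul ht.le]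
    simp only [t]
    field_simp
  have h := hM _ (by rw [htH]; linarith)
  rw [hφ _ H (by exact_mod_cast ht.ne') hH (by rw [htH]; linarith),
    norm_ofReal_smul ht.le] at h
  calc ‖φ H‖ = t⁻¹ * (t * ‖φ H‖) := by field_simp
    _ ≤ t⁻¹ * M := by gcongr
    _ = 2 * M / r * ‖H‖ := by simp only [t]; field_simp

theorem exists_linearMap (hφ : IsHomogeneousOnBall φ r) (hr : 0 < r)
    (hadd : ∀ G₁ G₂, ‖G₁‖ < r → ‖G₂‖ < r → φ (G₁ + G₂) = φ G₁ + φ G₂) :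
    ∃ ψ : E →ₗ[ℂ] F, ∀ H, ‖H‖ < r → ψ H = φ H := by
  -- `σ a` rescales every vector of norm at most `a` into the ball
  set σ : ℝ → ℝ := fun a => r / (2 * (|a| + 1))
  have hσ : ∀ a, 0 < σ a := fun a => by positivity
  have hσH : ∀ (a : ℝ) (H : E), ‖H‖ ≤ a → ‖(σ a : ℂ) • H‖ < r := by
    intro a H hH
    rw [norm_ofReal_smul (hσ a).le]
    calc σ a * ‖H‖ ≤ σ a * (|a| + 1) := by gcongr; linarith [le_abs_self a]
      _ = r / 2 := by simp only [σ]; field_simp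
      _ < r := by linarith
  set ψ : E → F := fun H => ((σ ‖H‖ : ℝ) : ℂ)⁻¹ • φ ((σ ‖H‖ : ℂ) • H)
  have hψ : ∀ (a : ℝ) (H : E), ‖H‖ ≤ a → ψ H = ((σ a : ℝ) : ℂ)⁻¹ • φ ((σ a : ℂ) • H) :=
    fun a H hH => hφ.inv_smul_map_smul_eq (hσ _) (hσ a) (hσH _ H le_rfl) (hσH a H hH)
  refine ⟨{ toFun := ψ, map_add' := fun G₁ G₂ => ?_, map_smul' := fun c G => ?_ },
    fun H hH => ?_⟩
  · have h₁ : ‖G₁‖ ≤ ‖G₁‖ + ‖G₂‖ := by simp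
    have h₂ : ‖G₂‖ ≤ ‖G₁‖ + ‖G₂‖ := by simp
    rw [hψ _ _ (norm_add_le _ _), hψ _ _ h₁, hψ _ _ h₂, smul_add,
      hadd _ _ (hσH _ _ h₁) (hσH _ _ h₂), smul_add]
  · rcases eq_or_ne c 0 with rfl | hc
    · simp [ψ, hφ.map_zero hr]
    have h₁ : ‖G‖ ≤ ‖G‖ + ‖c • G‖ := by simp
    have h₂ : ‖c • G‖ ≤ ‖G‖ + ‖c • G‖ := by simp
    have hcσG := hσH _ _ h₂
    rw [smul_comm] at hcσG
    rw [RingHom.id_apply, hψ _ _ h₂, hψ _ _ h₁, smul_comm _ c G,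
      hφ c _ hc (hσH _ _ h₁) hcσG, smul_comm]
  · change ((σ ‖H‖ : ℝ) : ℂ)⁻¹ • φ ((σ ‖H‖ : ℂ) • H) = φ H
    rw [hφ.inv_smul_map_smul_eq (hσ _) one_pos (hσH _ H le_rfl) (by simpa using hH)]
    simp

/-- For `0 < t ≤ 1`, `t • (φ(G₁ + G₂) - φ(G₁) - φ(G₂))` is a second difference of `g` minus
three remainders of the approximation `g(x + G) ≈ g(x) + φ(G)`, each of size `O(t²)`. -/
theorem map_add_of_sq_bounds {g : E → F} {x : E} {C : ℝ} (hφ : IsHomogeneousOnBall φ r)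
    (hquad : ∀ H, ‖H‖ < r → ‖g (x + H) - g x - φ H‖ ≤ C * ‖H‖ ^ 2)
    (hsecond : ∀ G₁ G₂, ‖G₁‖ < r → ‖G₂‖ < r →
      ‖g (x + G₁ + G₂) - g (x + G₁) - (g (x + G₂) - g x)‖ ≤ C * (‖G₁‖ * ‖G₂‖))
    {G₁ G₂ : E} (h₁ : ‖G₁‖ < r / 2) (h₂ : ‖G₂‖ < r / 2) :
    φ (G₁ + G₂) = φ G₁ + φ G₂ := by
  have h₁' : ‖G₁‖ < r := by linarith [norm_nonneg G₁]
  have h₂' : ‖G₂‖ < r := by linarith [norm_nonneg G₂]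
  have h₁₂ : ‖G₁ + G₂‖ < r := (norm_add_le _ _).trans_lt (by linarith)
  rw [← sub_eq_zero, ← sub_sub]
  apply eq_zero_of_forall_mul_norm_le_sq
    (C := C * ‖G₁ + G₂‖ ^ 2 + C * ‖G₁‖ ^ 2 + C * ‖G₂‖ ^ 2 + C * (‖G₁‖ * ‖G₂‖))
  intro t ht ht1
  have hsmall : ∀ G : E, ‖G‖ < r → ‖(t : ℂ) • G‖ < r := fun G hG => by
    rw [norm_ofReal_smul ht.le]
    nlinarith [norm_nonneg G]
  have hrem : ∀ G : E, ‖G‖ < r →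
      ‖g (x + (t : ℂ) • G) - g x - φ ((t : ℂ) • G)‖ ≤ C * ‖G‖ ^ 2 * t ^ 2 := fun G hG => by
    have := hquad _ (hsmall G hG)
    rw [norm_ofReal_smul ht.le] at this
    exact this.trans_eq (by ring)
  have hsec := hsecond _ _ (hsmall G₁ h₁') (hsmall G₂ h₂')
  rw [norm_ofReal_smul ht.le, norm_ofReal_smul ht.le] at hsec
  have key : (t : ℂ) • (φ (G₁ + G₂) - φ G₁ - φ G₂)
      = (g (x + (t : ℂ) • G₁ + (t : ℂ) • G₂) - g (x + (t : ℂ) • G₁)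
          - (g (x + (t : ℂ) • G₂) - g x))
        - (g (x + (t : ℂ) • (G₁ + G₂)) - g x - φ ((t : ℂ) • (G₁ + G₂)))
        + (g (x + (t : ℂ) • G₁) - g x - φ ((t : ℂ) • G₁))
        + (g (x + (t : ℂ) • G₂) - g x - φ ((t : ℂ) • G₂)) := by
    rw [hφ.map_ofReal_smul ht ht1 h₁₂, hφ.map_ofReal_smul ht ht1 h₁',
      hφ.map_ofReal_smul ht ht1 h₂', smul_add, ← add_assoc]
    module
  have h4 : ∀ A B C D : F, ‖A - B + C + D‖ ≤ ‖A‖ + ‖B‖ + ‖C‖ + ‖D‖ := fun A B C D => by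
    linarith [norm_add_le (A - B + C) D, norm_add_le (A - B) C, norm_sub_le A B]
  rw [← norm_ofReal_smul ht.le, key]
  refine (h4 _ _ _ _).trans ?_
  nlinarith [hrem _ h₁₂, hrem G₁ h₁', hrem G₂ h₂']

theorem exists_hasFDerivAt_of_sq_bounds [FiniteDimensional ℂ E] {g : E → F} {x : E}
    {C : ℝ} (hr : 0 < r) (hφ : IsHomogeneousOnBall φ r)
    (hquad : ∀ H, ‖H‖ < r → ‖g (x + H) - g x - φ H‖ ≤ C * ‖H‖ ^ 2)
    (hsecond : ∀ G₁ G₂, ‖G₁‖ < r → ‖G₂‖ < r →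
      ‖g (x + G₁ + G₂) - g (x + G₁) - (g (x + G₂) - g x)‖ ≤ C * (‖G₁‖ * ‖G₂‖)) :
    ∃ ψ : E →L[ℂ] F, HasFDerivAt g ψ x ∧ ∀ H, ‖H‖ < r / 2 → ψ H = φ H := by
  obtain ⟨ψ, hψ⟩ := (hφ.mono (half_le_self hr.le)).exists_linearMap (half_pos hr)
    fun G₁ G₂ h₁ h₂ => hφ.map_add_of_sq_bounds hquad hsecond h₁ h₂
  refine ⟨LinearMap.toContinuousLinearMap ψ,
    hasFDerivAt_of_norm_sub_le_sq (C := C) (half_pos hr) fun H hH => ?_, hψ⟩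
  rw [LinearMap.coe_toContinuousLinearMap', hψ H hH]
  exact hquad H (by linarith [norm_nonneg H])

end IsHomogeneousOnBall

end Homogeneous

section NCHolomorphy

variable {d : ℕ} {Ω : Set (MSpace d)} {f : ∀ m, MatTup d m → Mat m} {m : ℕ}

theorem dist_triple_lt {E : Type*} [SeminormedAddCommGroup E] {x H y b : E} {r : ℝ}
    (hx : ‖x - b‖ < r) (hH : ‖H‖ < r) (hy : ‖y - b‖ < r) : dist (x, H, y) (b, 0, b) < r := by
  rw [Prod.dist_eq, Prod.dist_eq, dist_zero_right, dist_eq_norm, dist_eq_norm]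
  exact max_lt hx (max_lt hH hy)

def UpperBallSubset (Ω : Set (MSpace d)) (b : MatTup d m) (ρ : ℝ) : Prop :=
  ∀ x H y : MatTup d m, ‖x - b‖ < ρ → ‖H‖ < ρ → ‖y - b‖ < ρ →
    (⟨m, x⟩ : MSpace d) ∈ Ω ∧ (⟨m + m, upperTup x H y⟩ : MSpace d) ∈ Ω

theorem IsNCDomain.eventually_upperTup_mem (hΩ : IsNCDomain Ω) {b : MatTup d m}
    (hb : (⟨m, b⟩ : MSpace d) ∈ Ω) :
    ∀ᶠ p : MatTup d m × MatTup d m × MatTup d m in 𝓝 (b, 0, b),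
      (⟨m + m, upperTup p.1 p.2.1 p.2.2⟩ : MSpace d) ∈ Ω :=
  ((hΩ.duOpen (m + m)).preimage (upperTupCLM d m).continuous).mem_nhds (hΩ.dsum_mem b b hb hb)

theorem IsNCDomain.exists_upperBallSubset (hΩ : IsNCDomain Ω) {b : MatTup d m}
    (hb : (⟨m, b⟩ : MSpace d) ∈ Ω) : ∃ ρ > 0, UpperBallSubset Ω b ρ := by
  obtain ⟨ε₁, hε₁, hball₁⟩ := Metric.isOpen_iff.mp (hΩ.duOpen m) b hb
  obtain ⟨ε₂, hε₂, hball₂⟩ := Metric.eventually_nhds_iff.mp (hΩ.eventually_upperTup_mem hb)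
  refine ⟨min ε₁ ε₂, lt_min hε₁ hε₂, fun x H y hx hH hy => ⟨hball₁ ?_, hball₂ (y := (x, H, y))
    (dist_triple_lt (hx.trans_le (min_le_right _ _)) (hH.trans_le (min_le_right _ _))
      (hy.trans_le (min_le_right _ _)))⟩⟩
  rw [Metric.mem_ball, dist_eq_norm]
  exact hx.trans_le (min_le_left _ _)

namespace UpperBallSubset

variable {b : MatTup d m} {ρ : ℝ}

theorem mono (hU : UpperBallSubset Ω b ρ) {ρ' : ℝ} (h : ρ' ≤ ρ) : UpperBallSubset Ω b ρ' :=
  fun x H y hx hH hy => hU x H y (hx.trans_le h) (hH.trans_le h) (hy.trans_le h)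

theorem isHomogeneousOnBall_ncDelta (hU : UpperBallSubset Ω b ρ) (hf : IsNCFunctionOn Ω f)
    {x y : MatTup d m} (hx : ‖x - b‖ < ρ) (hy : ‖y - b‖ < ρ) :
    IsHomogeneousOnBall (ncDelta f x y) ρ := fun _ H hc hH hcH =>
  hf.ncDelta_smul hc (hU x H y hx hH hy).2 (hU x _ y hx hcH hy).2

theorem sub_eq_ncDelta (hU : UpperBallSubset Ω b ρ) (hf : IsNCFunctionOn Ω f)
    (hΩ : IsNCDomain Ω) {x y : MatTup d m} (hx : ‖x - b‖ < ρ) (hy : ‖y - b‖ < ρ)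
    (hxy : ‖x - y‖ < ρ) : f m x - f m y = ncDelta f x y (x - y) :=
  (hf.ncDelta_sub_eq hΩ (hU x _ y hx hxy hy).1 (hU y _ x hy hxy hx).1
    (hU x (x - y) y hx hxy hy).2).symm

end UpperBallSubset

namespace IsNCFunctionOn

/-- `f(x) - f(y) = Δf(x,y)[x - y]`, and `Δf(x,y)` is bounded and homogeneous on a ball. -/
theorem exists_lipschitz (hf : IsNCFunctionOn Ω f) (hΩ : IsNCDomain Ω) {K : ℝ}
    (hK : ∀ z ∈ Ω, ‖f z.1 z.2‖ ≤ K) {b : MatTup d m} (hb : (⟨m, b⟩ : MSpace d) ∈ Ω) :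
    ∃ r > 0, ∃ L ≥ 0, ∀ x y : MatTup d m, ‖x - b‖ < r → ‖y - b‖ < r →
      ‖f m x - f m y‖ ≤ L * ‖x - y‖ := by
  obtain ⟨ρ, hρ, hU⟩ := hΩ.exists_upperBallSubset hb
  have hK0 : 0 ≤ K := (norm_nonneg _).trans (hK _ hb)
  refine ⟨ρ / 2, half_pos hρ, 2 * (‖topRightCLM m m‖ * K) / ρ, by positivity,
    fun x y hx hy => ?_⟩
  have hxy : ‖x - y‖ < ρ := by
    rw [← sub_sub_sub_cancel_right x y b]
    linarith [norm_sub_le (x - b) (y - b)]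
  have hx' : ‖x - b‖ < ρ := by linarith
  have hy' : ‖y - b‖ < ρ := by linarith
  rw [hU.sub_eq_ncDelta hf hΩ hx' hy' hxy]
  refine (hU.isHomogeneousOnBall_ncDelta hf hx' hy').norm_le_mul_norm hρ (fun H hH => ?_) hxy
  exact ((topRightCLM m m).le_opNorm _).trans
    (mul_le_mul_of_nonneg_left (hK _ (hU x H y hx' hH hy').2) (norm_nonneg _))

/-- Rescale `H` to a fixed size and use the Lipschitz bound of `f` at level `2m`. -/
theorem exists_norm_ncDelta_sub_le (hf : IsNCFunctionOn Ω f) (hΩ : IsNCDomain Ω) {K : ℝ}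
    (hK : ∀ z ∈ Ω, ‖f z.1 z.2‖ ≤ K) {b : MatTup d m} (hb : (⟨m, b⟩ : MSpace d) ∈ Ω) :
    ∃ r > 0, ∃ C ≥ 0, UpperBallSubset Ω b r ∧
      ∀ x y x' y' H : MatTup d m, ‖x - b‖ < r → ‖y - b‖ < r → ‖x' - b‖ < r → ‖y' - b‖ < r →
        ‖H‖ < r → ‖ncDelta f x y H - ncDelta f x' y' H‖ ≤ C * ‖H‖ * (‖x - x'‖ + ‖y - y'‖) := by
  obtain ⟨ρ, hρ, hU⟩ := hΩ.exists_upperBallSubset hb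
  obtain ⟨r₂, hr₂, L₂, hL₂0, hL₂⟩ := hf.exists_lipschitz hΩ hK (hΩ.dsum_mem b b hb hb)
  obtain ⟨δ, hδ, hcont⟩ :=
    Metric.continuous_iff.mp (upperTupCLM d m).continuous (b, 0, b) r₂ hr₂
  set r := min ρ δ
  have hr : 0 < r := lt_min hρ hδ
  have hnear : ∀ x H y : MatTup d m, ‖x - b‖ < r → ‖H‖ < r → ‖y - b‖ < r →
      ‖upperTup x H y - dSum b b‖ < r₂ := fun x H y hx hH hy => by
    rw [← dist_eq_norm]
    exact hcont (x, H, y) (dist_triple_lt (hx.trans_le (min_le_right _ _))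
      (hH.trans_le (min_le_right _ _)) (hy.trans_le (min_le_right _ _)))
  set cT := ‖upperTupCLM d m‖
  set cE := ‖topRightCLM m m‖
  have hUr := hU.mono (min_le_left _ δ)
  refine ⟨r, hr, 2 * (cE * L₂ * cT) / r, by positivity, hUr, ?_⟩
  intro x y x' y' H hx hy hx' hy' hH
  have hφ := (hUr.isHomogeneousOnBall_ncDelta hf hx hy).sub
    (hUr.isHomogeneousOnBall_ncDelta hf hx' hy')
  refine (hφ.norm_le_mul_norm hr (M := cE * L₂ * cT * (‖x - x'‖ + ‖y - y'‖))
    (fun H hH => ?_) hH).trans_eq (by ring)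
  have hdiff : ncDelta f x y H - ncDelta f x' y' H
      = topRightCLM m m (f (m + m) (upperTup x H y) - f (m + m) (upperTup x' H y')) :=
    ((topRightCLM m m).map_sub _ _).symm
  rw [hdiff]
  calc _ ≤ cE * ‖f (m + m) (upperTup x H y) - f (m + m) (upperTup x' H y')‖ :=
        (topRightCLM m m).le_opNorm _
    _ ≤ cE * (L₂ * ‖upperTup x H y - upperTup x' H y'‖) := by
        gcongr
        exact hL₂ _ _ (hnear x H y hx hH hy) (hnear x' H y' hx' hH hy')
    _ ≤ cE * (L₂ * (cT * (‖x - x'‖ + ‖H - H‖ + ‖y - y'‖))) := by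
        rw [upperTup_sub]
        gcongr
        exact norm_upperTup_le _ _ _
    _ = cE * L₂ * cT * (‖x - x'‖ + ‖y - y'‖) := by rw [sub_self, norm_zero]; ring

/-- `f(x + H) - f(x) - Δf(x,x)[H] = Δf(x + H, x)[H] - Δf(x,x)[H] = O(‖H‖²)`, and similarly for
the second differences of `f`. -/
theorem exists_hasFDerivAt (hf : IsNCFunctionOn Ω f) (hΩ : IsNCDomain Ω) {K : ℝ}
    (hK : ∀ z ∈ Ω, ‖f z.1 z.2‖ ≤ K) {b : MatTup d m} (hb : (⟨m, b⟩ : MSpace d) ∈ Ω) :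
    ∃ r > 0, ∀ x, ‖x - b‖ < r → ∃ ψ : MatTup d m →L[ℂ] Mat m, HasFDerivAt (f m) ψ x ∧
      ∀ H, ‖H‖ < r → ψ H = ncDelta f x x H := by
  obtain ⟨r, hr, C, hC0, hU, hC⟩ := hf.exists_norm_ncDelta_sub_le hΩ hK hb
  refine ⟨r / 6, by positivity, fun x hx => ?_⟩
  have hx' : ‖x - b‖ < r := by linarith
  have hnear : ∀ G : MatTup d m, ‖G‖ < 2 * r / 3 → ‖x + G - b‖ < r := fun G hG => by
    rw [add_sub_right_comm]
    linarith [norm_add_le (x - b) G]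
  have hquad : ∀ H, ‖H‖ < r / 3 → ‖f m (x + H) - f m x - ncDelta f x x H‖ ≤ 2 * C * ‖H‖ ^ 2 := by
    intro H hH
    have hH' : ‖H‖ < r := by linarith
    have hxH := hnear H (by linarith)
    rw [hU.sub_eq_ncDelta hf hΩ hxH hx' (by rw [add_sub_cancel_left]; exact hH'),
      add_sub_cancel_left]
    have := hC (x + H) x x x H hxH hx' hx' hx' hH'
    rw [add_sub_cancel_left, sub_self, norm_zero, add_zero] at this
    nlinarith [norm_nonneg H]
  have hsecond : ∀ G₁ G₂, ‖G₁‖ < r / 3 → ‖G₂‖ < r / 3 →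
      ‖f m (x + G₁ + G₂) - f m (x + G₁) - (f m (x + G₂) - f m x)‖
        ≤ 2 * C * (‖G₁‖ * ‖G₂‖) := by
    intro G₁ G₂ h₁ h₂
    have h₂' : ‖G₂‖ < r := by linarith
    have hx₁₂ : ‖x + G₁ + G₂ - b‖ < r := by
      rw [add_assoc]
      exact hnear _ ((norm_add_le G₁ G₂).trans_lt (by linarith))
    have hx₁ := hnear G₁ (by linarith)
    have hx₂ := hnear G₂ (by linarith)
    have e₁ := hU.sub_eq_ncDelta hf hΩ hx₁₂ hx₁ (by rw [add_sub_cancel_left]; exact h₂')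
    have e₂ := hU.sub_eq_ncDelta hf hΩ hx₂ hx' (by rw [add_sub_cancel_left]; exact h₂')
    rw [add_sub_cancel_left] at e₁ e₂
    rw [e₁, e₂]
    have := hC _ _ _ _ G₂ hx₁₂ hx₁ hx₂ hx' h₂'
    rw [add_sub_add_right_eq_sub, add_sub_cancel_left] at this
    nlinarith [norm_nonneg G₁, norm_nonneg G₂]
  obtain ⟨ψ, hψ, hψΔ⟩ := IsHomogeneousOnBall.exists_hasFDerivAt_of_sq_bounds (by positivity)
    ((hU.isHomogeneousOnBall_ncDelta hf hx' hx').mono (by linarith)) hquad hsecond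
  exact ⟨ψ, hψ, fun H hH => hψΔ H (by linarith)⟩

theorem eventually_fderiv_eq_ncDelta (hf : IsNCFunctionOn Ω f) (hΩ : IsNCDomain Ω) {K : ℝ}
    (hK : ∀ z ∈ Ω, ‖f z.1 z.2‖ ≤ K) {b : MatTup d m} (hb : (⟨m, b⟩ : MSpace d) ∈ Ω) :
    ∀ᶠ p : MatTup d m × MatTup d m in 𝓝 (b, 0),
      DifferentiableAt ℂ (f m) p.1 ∧ fderiv ℂ (f m) p.1 p.2 = ncDelta f p.1 p.1 p.2 := by
  obtain ⟨r, hr, hderiv⟩ := hf.exists_hasFDerivAt hΩ hK hb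
  filter_upwards [Metric.ball_mem_nhds (b, (0 : MatTup d m)) hr] with p hp
  rw [Metric.mem_ball, Prod.dist_eq, max_lt_iff, dist_eq_norm, dist_zero_right] at hp
  obtain ⟨ψ, hψ, hψΔ⟩ := hderiv p.1 hp.1
  exact ⟨hψ.differentiableAt, by rw [hψ.fderiv, hψΔ p.2 hp.2]⟩

end IsNCFunctionOn

theorem ncHess_eq_topRight_fderiv {n : ℕ} {a h : MatTup d n}
    (hD : ∀ᶠ x in 𝓝 a, fderiv ℂ (f n) x h = ncDelta f x x h)
    (hdiff : DifferentiableAt ℂ (f (n + n)) (upperTup a h a)) (k : MatTup d n) :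
    ncHess f a h k = topRight (fderiv ℂ (f (n + n)) (upperTup a h a) (dSum k k)) := by
  have hup : HasFDerivAt (fun x => upperTup x h x)
      ((upperTupCLM d n).comp ((ContinuousLinearMap.id ℂ _).prod
        ((0 : MatTup d n →L[ℂ] MatTup d n).prod (ContinuousLinearMap.id ℂ _)))) a :=
    (upperTupCLM d n).hasFDerivAt.comp a
      (hasFDerivAt_id a |>.prodMk ((hasFDerivAt_const h a).prodMk (hasFDerivAt_id a)))
  have hΔ : HasFDerivAt (fun x => ncDelta f x x h) _ a := (topRightCLM n n).hasFDerivAt.comp a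
    (HasFDerivAt.comp (f := fun x => upperTup x h x) a hdiff.hasFDerivAt hup)
  rw [ncHess, Filter.EventuallyEq.fderiv_eq hD, hΔ.fderiv]
  rfl

end NCHolomorphy

section HessianBlockFormula

variable {d : ℕ} {Ω : Set (MSpace d)} {f : ∀ m, MatTup d m → Mat m}

theorem IsNCFunctionOn.hessian_block_formula (hf : IsNCFunctionOn Ω f) (hΩ : IsNCDomain Ω)
    {n : ℕ} {a h k : MatTup d n} (ha : (⟨n, a⟩ : MSpace d) ∈ Ω)
    (hXh : (⟨n + n, upperTup a h a⟩ : MSpace d) ∈ Ω)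
    (hXk : (⟨n + n, upperTup a k a⟩ : MSpace d) ∈ Ω)
    (hW : (⟨n + n + (n + n), upperTup (upperTup a k a) (dSum h h) (upperTup a k a)⟩ : MSpace d)
      ∈ Ω)
    (hW' : (⟨n + n + (n + n), upperTup (upperTup a h a) (dSum k k) (upperTup a h a)⟩ : MSpace d)
      ∈ Ω)
    (hDh : fderiv ℂ (f n) a h = ncDelta f a a h) (hDk : fderiv ℂ (f n) a k = ncDelta f a a k)
    (hD : ∀ᶠ x in 𝓝 a, fderiv ℂ (f n) x h = ncDelta f x x h)
    (hdiff : DifferentiableAt ℂ (f (n + n)) (upperTup a h a))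
    (hD₂ : fderiv ℂ (f (n + n)) (upperTup a h a) (dSum k k)
      = ncDelta f (upperTup a h a) (upperTup a h a) (dSum k k)) :
    f (n + n + (n + n)) (upperTup (upperTup a k a) (dSum h h) (upperTup a k a))
      = blk (blk (f n a) (fderiv ℂ (f n) a k) 0 (f n a))
          (blk (fderiv ℂ (f n) a h) (ncHess f a h k) 0 (fderiv ℂ (f n) a h))
          0 (blk (f n a) (fderiv ℂ (f n) a k) 0 (f n a)) := by
  have hfXh := hf.apply_upperTup hΩ ha ha hXh
  have hfXk := hf.apply_upperTup hΩ ha ha hXk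
  have hfW := hf.apply_upperTup hΩ hXk hXk hW
  have hfW' := hf.apply_upperTup hΩ hXh hXh hW'
  -- conjugating by `midSwap` exchanges the roles of `h` and `k`
  have hswap := hf.sim_eq _ _ (isUnit_midSwap n) hW (by rwa [simConj_midSwap])
  obtain ⟨g₁₁, g₁₂, g₂₁, g₂₂, hG⟩ := blk_surjective (ncDelta f _ _ (dSum h h) : Mat (n + n))
  obtain ⟨g₁₁', g₁₂', g₂₁', g₂₂', hG'⟩ :=
    blk_surjective (ncDelta f _ _ (dSum k k) : Mat (n + n))
  have hHess : ncHess f a h k = g₁₂' := by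
    rw [ncHess_eq_topRight_fderiv hD hdiff, hD₂, ← hG', topRight_blk]
  rw [simConj_midSwap, midSwap_inv, hfW', hfW, hfXh, hfXk, ← hG, ← hG', ← hDh, ← hDk,
    ← blk_zero (p := n) (q := n), midSwap_conj] at hswap
  obtain ⟨h₁₁, h₁₂, h₂₁, h₂₂⟩ := blk_inj hswap
  obtain ⟨-, rfl, -, -⟩ := blk_inj h₁₁
  obtain ⟨-, rfl, -, -⟩ := blk_inj h₁₂
  obtain ⟨-, rfl, -, -⟩ := blk_inj h₂₁
  obtain ⟨-, rfl, -, -⟩ := blk_inj h₂₂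
  rw [hfW, hfXk, ← hG, ← hDk, hHess]

theorem IsNCFunctionOn.eventually_hessian_block_formula (hf : IsNCFunctionOn Ω f)
    (hΩ : IsNCDomain Ω) {K : ℝ} (hK : ∀ z ∈ Ω, ‖f z.1 z.2‖ ≤ K) {n : ℕ} {a : MatTup d n}
    (ha : (⟨n, a⟩ : MSpace d) ∈ Ω) :
    ∀ᶠ p : MatTup d n × MatTup d n in 𝓝 0,
      (⟨n + n + (n + n), upperTup (upperTup a p.2 a) (dSum p.1 p.1) (upperTup a p.2 a)⟩ :
        MSpace d) ∈ Ω ∧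
      f (n + n + (n + n)) (upperTup (upperTup a p.2 a) (dSum p.1 p.1) (upperTup a p.2 a))
        = blk (blk (f n a) (fderiv ℂ (f n) a p.2) 0 (f n a))
            (blk (fderiv ℂ (f n) a p.1) (ncHess f a p.1 p.2) 0 (fderiv ℂ (f n) a p.1))
            0 (blk (f n a) (fderiv ℂ (f n) a p.2) 0 (f n a)) := by
  have haa := hΩ.dsum_mem a a ha ha
  have hD := hf.eventually_fderiv_eq_ncDelta hΩ hK ha
  have hX : Tendsto (fun H => upperTup a H a) (𝓝 0) (𝓝 (dSum a a)) :=
    tendsto_const_nhds.upperTup tendsto_id tendsto_const_nhds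
  have hS : Tendsto (fun H : MatTup d n => dSum H H) (𝓝 0) (𝓝 0) := by
    have h := (tendsto_id (x := 𝓝 (0 : MatTup d n))).upperTup
      (tendsto_const_nhds (x := (0 : MatTup d n))) tendsto_id
    rwa [upperTup_zero, dSum_zero] at h
  have hfst : Tendsto Prod.fst (𝓝 (0 : MatTup d n × MatTup d n)) (𝓝 0) :=
    continuous_fst.tendsto 0
  have hsnd : Tendsto Prod.snd (𝓝 (0 : MatTup d n × MatTup d n)) (𝓝 0) :=
    continuous_snd.tendsto 0
  have hmem : ∀ᶠ H in 𝓝 (0 : MatTup d n), (⟨n + n, upperTup a H a⟩ : MSpace d) ∈ Ω :=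
    (tendsto_const_nhds.prodMk_nhds (tendsto_id.prodMk_nhds tendsto_const_nhds)).eventually
      (hΩ.eventually_upperTup_mem ha)
  have hDa : ∀ᶠ H in 𝓝 (0 : MatTup d n), fderiv ℂ (f n) a H = ncDelta f a a H :=
    ((tendsto_const_nhds.prodMk_nhds tendsto_id).eventually hD).mono fun _ hH => hH.2
  have hDnear : ∀ᶠ H in 𝓝 (0 : MatTup d n), ∀ᶠ x in 𝓝 a,
      fderiv ℂ (f n) x H = ncDelta f x x H := by
    rw [nhds_prod_eq, eventually_swap_iff] at hD
    exact hD.curry.mono fun H hH => hH.mono fun x hx => hx.2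
  have htwo : ∀ᶠ p : MatTup d n × MatTup d n in 𝓝 0,
      (⟨n + n + (n + n), upperTup (upperTup a p.2 a) (dSum p.1 p.1) (upperTup a p.2 a)⟩ :
        MSpace d) ∈ Ω :=
    ((hX.comp hsnd).prodMk_nhds ((hS.comp hfst).prodMk_nhds (hX.comp hsnd))).eventually
      (hΩ.eventually_upperTup_mem haa)
  have hderiv₂ := ((hX.comp hfst).prodMk_nhds (hS.comp hsnd)).eventually
    (hf.eventually_fderiv_eq_ncDelta hΩ hK haa)
  filter_upwards [hfst.eventually hmem, hsnd.eventually hmem, htwo,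
    (continuous_swap.tendsto (0 : MatTup d n × MatTup d n)).eventually htwo,
    hfst.eventually hDa, hsnd.eventually hDa, hfst.eventually hDnear, hderiv₂]
    with p hXh hXk hW hW' hDh hDk hDnear hD₂
  exact ⟨hW, hf.hessian_block_formula hΩ ha hXh hXk hW hW' hDh hDk hDnear hD₂.1 hD₂.2⟩

end HessianBlockFormula

end

theorem fine_holo_hessian_block_formula_general (d n : ℕ) (Ω : Set (MSpace d))
    (f : ∀ m, MatTup d m → Mat m) (hf : IsFineHolo Ω f)
    (a : MatTup d n) (ha : (⟨n, a⟩ : MSpace d) ∈ Ω) :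
    ∃ ε : ℝ, 0 < ε ∧ ∀ h k : MatTup d n, ‖h‖ < ε → ‖k‖ < ε →
      (⟨n + n + (n + n), fun r =>
          blk (blk (a r) (k r) 0 (a r)) (blk (h r) 0 0 (h r))
            0 (blk (a r) (k r) 0 (a r))⟩ : MSpace d) ∈ Ω ∧
      f (n + n + (n + n)) (fun r =>
          blk (blk (a r) (k r) 0 (a r)) (blk (h r) 0 0 (h r))
            0 (blk (a r) (k r) 0 (a r)))
        = blk (blk (f n a) (fderiv ℂ (f n) a k) 0 (f n a))
            (blk (fderiv ℂ (f n) a h) (ncHess f a h k) 0 (fderiv ℂ (f n) a h))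
            0 (blk (f n a) (fderiv ℂ (f n) a k) 0 (f n a)) := by
  obtain ⟨-, hnc, hbdd⟩ := hf
  obtain ⟨Ω₁, hΩ₁, haΩ₁, hsub, K, hK⟩ := hbdd ⟨n, a⟩ ha
  obtain ⟨ε, hε, hball⟩ := Metric.eventually_nhds_iff.mp
    ((hnc.mono hsub).eventually_hessian_block_formula hΩ₁ hK haΩ₁)
  refine ⟨ε, hε, fun h k hh hk => ?_⟩
  obtain ⟨hmem, heq⟩ := hball (y := (h, k)) (by
    rw [dist_zero_right, Prod.norm_mk]
    exact max_lt hh hk)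
  exact ⟨hsub hmem, heq⟩

/-- For a fine holomorphic `f` on an nc domain `Ω` and `a ∈ Ω ∩ M_n^d`, for all
sufficiently small `h, k` the `4 × 4` block upper triangular point built from
`a, h, k` lies in `Ω` and `f` of it is the corresponding block matrix involving
`f(a)`, `Df(a)[h]`, `Df(a)[k]`, and the Hessian `Hf(a)[h,k]`. -/
theorem fine_holo_hessian_block_formula (d n : ℕ) (Ω : Set (MSpace d))
    (hΩ : IsNCDomain Ω) (f : ∀ m, MatTup d m → Mat m) (hf : IsFineHolo Ω f)
    (a : MatTup d n) (ha : (⟨n, a⟩ : MSpace d) ∈ Ω) :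
    ∃ ε : ℝ, 0 < ε ∧ ∀ h k : MatTup d n, ‖h‖ < ε → ‖k‖ < ε →
      (⟨n + n + (n + n), fun r =>
          blk (blk (a r) (k r) 0 (a r)) (blk (h r) 0 0 (h r))
            0 (blk (a r) (k r) 0 (a r))⟩ : MSpace d) ∈ Ω ∧
      f (n + n + (n + n)) (fun r =>
          blk (blk (a r) (k r) 0 (a r)) (blk (h r) 0 0 (h r))
            0 (blk (a r) (k r) 0 (a r)))
        = blk (blk (f n a) (fderiv ℂ (f n) a k) 0 (f n a))
            (blk (fderiv ℂ (f n) a h) (ncHess f a h k) 0 (fderiv ℂ (f n) a h))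
            0 (blk (f n a) (fderiv ℂ (f n) a k) 0 (f n a)) :=
  fine_holo_hessian_block_formula_general d n Ω f hf a ha
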